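/- arXiv:2510.26003 — 3 statements merged into one kernel-verified Lean document; each statement's English description precedes it below -/
import Mathlib

section
/- An integer vector x = (x₁, …, x_N) ∈ ℤ^N is a solution of the linear system A·x ≡ T_k (mod q) (i.e. A·xᵀ and T_k are congruent entrywise modulo q) if and only if there exist integers ρ₁, …, ρ_k such that the vector (x₁, …, x_N, N₁, q·N₂·ρ₁, …, q·N₂·ρ_k) ∈ ℤ^{N+k+1} is a point of the lattice L. -/
/-- The matrix `B_k` from the paper, of size `(N+k+1) × (N+k+1)`, in block form
`[[I_N, 0, N₂·Aᵀ], [0, N₁, −N₂·T_kᵀ], [0, 0, N₂·q·I_k]]` (rows/columns indexed from `0`). -/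
def Bk (N k : ℕ) (q N1 N2 : ℤ) (A : Matrix (Fin k) (Fin N) ℤ) (T : Fin k → ℤ) :
    Matrix (Fin (N + k + 1)) (Fin (N + k + 1)) ℤ := fun i j =>
  if hi : (i : ℕ) < N then
    if hj : (j : ℕ) < N then (if (i : ℕ) = (j : ℕ) then 1 else 0)
    else if hj' : (j : ℕ) = N then 0
    else N2 * A ⟨(j : ℕ) - (N + 1), by have := j.isLt; omega⟩ ⟨(i : ℕ), hi⟩
  else if hi' : (i : ℕ) = N then
    if hj : (j : ℕ) < N then 0
    else if hj' : (j : ℕ) = N then N1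
    else -(N2 * T ⟨(j : ℕ) - (N + 1), by have := j.isLt; omega⟩)
  else
    if (i : ℕ) = (j : ℕ) then N2 * q else 0

/-- The lattice `L` generated by the rows of `B_k`: all integer linear combinations
of the rows of `B_k`. -/
def latticeL (N k : ℕ) (q N1 N2 : ℤ) (A : Matrix (Fin k) (Fin N) ℤ) (T : Fin k → ℤ) :
    Set (Fin (N + k + 1) → ℤ) :=
  {v | ∃ c : Fin (N + k + 1) → ℤ, v = Matrix.vecMul c (Bk N k q N1 N2 A T)}

variable {N k : ℕ} {q N1 N2 : ℤ} {A : Matrix (Fin k) (Fin N) ℤ} {T : Fin k → ℤ}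

lemma vecMul_Bk_lt (c : Fin (N + k + 1) → ℤ) (j : Fin (N + k + 1)) (hj : (j : ℕ) < N) :
    Matrix.vecMul c (Bk N k q N1 N2 A T) j = c j := by
  rw [Matrix.vecMul, dotProduct]
  rw [Finset.sum_eq_single j]
  · simp [Bk, hj]
  · intro i _ hij
    have hij' : (i : ℕ) ≠ (j : ℕ) := fun h => hij (Fin.ext h)
    rcases lt_trichotomy (i : ℕ) N with hi | hi | hi
    · simp [Bk, hi, hj, hij']
    · simp [Bk, hi, hj]
    · have hiN : (i : ℕ) ≠ N := by omega
      simp [Bk, hj, hij', Nat.lt_asymm hi, hiN]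
  · simp

lemma vecMul_Bk_eq (c : Fin (N + k + 1) → ℤ) (j : Fin (N + k + 1)) (hj : (j : ℕ) = N) :
    Matrix.vecMul c (Bk N k q N1 N2 A T) j = c j * N1 := by
  rw [Matrix.vecMul, dotProduct]
  rw [Finset.sum_eq_single j]
  · simp [Bk, hj]
  · intro i _ hij
    have hij' : (i : ℕ) ≠ (j : ℕ) := fun h => hij (Fin.ext h)
    rcases lt_trichotomy (i : ℕ) N with hi | hi | hi
    · simp [Bk, hi, hj]
    · exact absurd (hi.trans hj.symm) hij'
    · have hiN : (i : ℕ) ≠ N := by omega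
      simp [Bk, hj, hij', Nat.lt_asymm hi, hiN]
  · simp

lemma vecMul_Bk_gt (c : Fin (N + k + 1) → ℤ) (j : Fin (N + k + 1)) (hj : N < (j : ℕ)) :
    Matrix.vecMul c (Bk N k q N1 N2 A T) j =
      (∑ i : Fin N, c ⟨(i : ℕ), by omega⟩ *
        (N2 * A ⟨(j : ℕ) - (N + 1), by have := j.isLt; omega⟩ i))
      + c ⟨N, by omega⟩ * (-(N2 * T ⟨(j : ℕ) - (N + 1), by have := j.isLt; omega⟩))
      + c j * (N2 * q) := by
  have hjN : ¬ ((j : ℕ) < N) := by omega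
  have hjN' : (j : ℕ) ≠ N := by omega
  set g : ℕ → ℤ := fun n =>
    if h : n < N + k + 1 then c ⟨n, h⟩ * Bk N k q N1 N2 A T ⟨n, h⟩ j else 0 with hg
  rw [Matrix.vecMul, dotProduct]
  have h1 : ∑ i : Fin (N + k + 1), c i * Bk N k q N1 N2 A T i j
      = ∑ n ∈ Finset.range (N + k + 1), g n := by
    rw [← Fin.sum_univ_eq_sum_range]
    refine Finset.sum_congr rfl fun i _ => ?_
    simp [hg, i.isLt]
    intro h; have := i.isLt; omega
  rw [h1]
  have hsplit : N + k + 1 = N + 1 + k := by omega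
  conv_lhs => rw [hsplit]
  rw [Finset.sum_range_add, Finset.sum_range_succ]
  congr 1
  · congr 1
    · rw [← Fin.sum_univ_eq_sum_range]
      refine Finset.sum_congr rfl fun i _ => ?_
      have hi : (i : ℕ) < N + k + 1 := by omega
      simp only [hg, dif_pos hi, Bk, Fin.isLt, i.isLt, dif_pos, hjN, hjN', dif_neg]
      simp
    · have hN : N < N + k + 1 := by omega
      simp only [hg, dif_pos hN, Bk]
      simp [hjN, hjN']
  · have hrw : ∑ x ∈ Finset.range k, g (N + 1 + x) = ∑ x : Fin k, g (N + 1 + x) := by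
      rw [← Fin.sum_univ_eq_sum_range]
    rw [hrw]
    rw [Finset.sum_eq_single (⟨(j : ℕ) - (N + 1), by have := j.isLt; omega⟩ : Fin k)]
    · have hjv : N + 1 + ((j : ℕ) - (N + 1)) = (j : ℕ) := by omega
      have hlt : N + 1 + ((j : ℕ) - (N + 1)) < N + k + 1 := by have := j.isLt; omega
      simp only [hg, dif_pos hlt, Bk]
      have h2 : ¬ (N + 1 + ((j : ℕ) - (N + 1)) < N) := by omega
      have h3 : N + 1 + ((j : ℕ) - (N + 1)) ≠ N := by omega
      simp only [dif_neg h2, dif_neg h3, hjv, if_pos rfl]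
      simp [hjN, hjN']
    · intro x _ hx
      have hlt : N + 1 + (x : ℕ) < N + k + 1 := by omega
      have h2 : ¬ (N + 1 + (x : ℕ) < N) := by omega
      have h3 : N + 1 + (x : ℕ) ≠ N := by omega
      have h4 : N + 1 + (x : ℕ) ≠ (j : ℕ) := by
        intro h
        apply hx
        apply Fin.ext
        simp only []
        omega
      simp only [hg, dif_pos hlt, Bk, dif_neg h2, dif_neg h3, if_neg h4, mul_zero]
    · simp

/-- `x ∈ ℤ^N` solves `A·x ≡ T_k (mod q)` entrywise iff there exist integers
`ρ₁, …, ρ_k` such that `(x, N₁, qN₂ρ₁, …, qN₂ρ_k)` is a point of the lattice `L`. -/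
theorem stmt_4 (N k : ℕ) (q N1 N2 : ℤ) (hN : 0 < N) (hk : 0 < k) (hkN : k ≤ N)
    (hq : 0 < q) (hN1 : 0 < N1) (hN2 : 0 < N2)
    (A : Matrix (Fin k) (Fin N) ℤ) (T : Fin k → ℤ)
    (x : Fin N → ℤ) :
    (∀ l : Fin k, q ∣ (A.mulVec x l - T l)) ↔
      ∃ ρ : Fin k → ℤ,
        (fun j : Fin (N + k + 1) =>
          if h : (j : ℕ) < N then x ⟨(j : ℕ), h⟩
          else if (j : ℕ) = N then N1
          else q * N2 * ρ ⟨(j : ℕ) - (N + 1), by have := j.isLt; omega⟩)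
        ∈ latticeL N k q N1 N2 A T := by
  have hsum : ∀ l : Fin k,
      (∑ i : Fin N, x i * (N2 * A l i)) = N2 * (A.mulVec x l) := by
    intro l
    rw [Matrix.mulVec, dotProduct, Finset.mul_sum]
    exact Finset.sum_congr rfl fun i _ => by ring
  constructor
  · intro hdvd
    choose m hm using hdvd
    refine ⟨m, ?_⟩
    refine ⟨fun i => if h : (i : ℕ) < N then x ⟨(i : ℕ), h⟩
      else if (i : ℕ) = N then 1 else 0, ?_⟩
    funext j
    rcases lt_trichotomy (j : ℕ) N with hj | hj | hj
    · rw [vecMul_Bk_lt _ _ hj]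
      simp [hj]
    · have hjN : ¬ ((j : ℕ) < N) := by omega
      rw [vecMul_Bk_eq _ _ hj]
      simp [hjN, hj]
    · have hjN : ¬ ((j : ℕ) < N) := by omega
      have hjN' : (j : ℕ) ≠ N := by omega
      rw [vecMul_Bk_gt _ _ hj]
      simp only [dif_neg hjN, if_neg hjN']
      have e1 : ∀ i : Fin N, (if h : ((⟨(i : ℕ), by omega⟩ : Fin (N + k + 1)) : ℕ) < N
          then x ⟨((⟨(i : ℕ), by omega⟩ : Fin (N + k + 1)) : ℕ), h⟩
          else if ((⟨(i : ℕ), by omega⟩ : Fin (N + k + 1)) : ℕ) = N then 1 else 0) = x i := by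
        intro i; simp [i.isLt]
      simp only [e1]
      have hNlt : ¬ (N < N) := by omega
      simp [hjN, hjN']
      rw [hsum]
      have key := hm ⟨(j : ℕ) - (N + 1), by have := j.isLt; omega⟩
      linear_combination -N2 * key
  · rintro ⟨ρ, c, hc⟩
    intro l
    have hcx : ∀ i : Fin N, c ⟨(i : ℕ), by omega⟩ = x i := by
      intro i
      have h := congrFun hc ⟨(i : ℕ), by omega⟩
      rw [vecMul_Bk_lt _ _ (by simpa using i.isLt)] at h
      simpa [i.isLt] using h.symm
    have hcN : c ⟨N, by omega⟩ = 1 := by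
      have h := congrFun hc ⟨N, by omega⟩
      rw [vecMul_Bk_eq _ _ (by simp)] at h
      have hNlt : ¬ (N < N) := by omega
      simp [hNlt] at h
      have h1 : (1 : ℤ) * N1 = c ⟨N, by omega⟩ * N1 := by rw [one_mul]; exact h
      exact (mul_right_cancel₀ (ne_of_gt hN1) h1).symm
    have hjlt : N + 1 + (l : ℕ) < N + k + 1 := by omega
    have h := congrFun hc ⟨N + 1 + (l : ℕ), hjlt⟩
    rw [vecMul_Bk_gt _ _ (by simp; omega)] at h
    simp only [Fin.val_mk, Nat.add_sub_cancel_left, Fin.eta, hcx, hcN] at h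
    have h2 : ¬ (N + 1 + (l : ℕ) < N) := by omega
    have h3 : N + 1 + (l : ℕ) ≠ N := by omega
    simp only [dif_neg h2, if_neg h3] at h
    refine ⟨ρ l - c ⟨N + 1 + (l : ℕ), hjlt⟩, ?_⟩
    have key : N2 * (A.mulVec x l - T l) =
        N2 * (q * (ρ l - c ⟨N + 1 + (l : ℕ), hjlt⟩)) := by
      rw [hsum l] at h
      linear_combination -h
    exact mul_left_cancel₀ (ne_of_gt hN2) key
end

section
/- Let ε ∈ {1, −1} and let x ∈ ℤ^N be such that the vector (x₁, …, x_N, ε·N₁, 0, …, 0) ∈ ℤ^{N+k+1} (with k trailing zeros) belongs to the lattice L. Then the vector ε·x satisfies A·(ε·x) ≡ T_k (mod q) entrywise. -/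
lemma Bk_col_lt {N k : ℕ} {q N1 N2 : ℤ} {A : Matrix (Fin k) (Fin N) ℤ} {T : Fin k → ℤ}
    (i j : Fin (N + k + 1)) (hj : (j : ℕ) < N) :
    Bk N k q N1 N2 A T i j = if (i : ℕ) = (j : ℕ) then 1 else 0 := by
  simp only [Bk]
  split_ifs <;> first | rfl | omega

lemma Bk_col_N {N k : ℕ} {q N1 N2 : ℤ} {A : Matrix (Fin k) (Fin N) ℤ} {T : Fin k → ℤ}
    (i j : Fin (N + k + 1)) (hj : (j : ℕ) = N) :
    Bk N k q N1 N2 A T i j = if (i : ℕ) = N then N1 else 0 := by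
  simp only [Bk]
  split_ifs <;> first | rfl | omega

lemma Bk_col_hi {N k : ℕ} {q N1 N2 : ℤ} {A : Matrix (Fin k) (Fin N) ℤ} {T : Fin k → ℤ}
    (i j : Fin (N + k + 1)) (l : Fin k) (hj : (j : ℕ) = N + 1 + l) :
    Bk N k q N1 N2 A T i j =
      if hi : (i : ℕ) < N then N2 * A l ⟨(i : ℕ), hi⟩
      else if (i : ℕ) = N then -(N2 * T l)
      else if (i : ℕ) = N + 1 + l then N2 * q else 0 := by
  simp only [Bk]
  have hl : ((j : ℕ) - (N + 1)) = (l : ℕ) := by omega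
  have hl' : (⟨(j : ℕ) - (N + 1), by have := j.isLt; omega⟩ : Fin k) = l := Fin.ext hl
  split_ifs <;> first
    | omega
    | rfl
    | rw [hl']

set_option maxHeartbeats 1000000 in
/-- If `ε ∈ {1, −1}` and `(x, ε·N₁, 0, …, 0) ∈ L` (with `k` trailing zeros), then
`ε·x` satisfies `A·(ε·x) ≡ T_k (mod q)` entrywise. -/
theorem stmt_5 (N k : ℕ) (q N1 N2 : ℤ) (hN : 0 < N) (hk : 0 < k) (hkN : k ≤ N)
    (hq : 0 < q) (hN1 : 0 < N1) (hN2 : 0 < N2)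
    (A : Matrix (Fin k) (Fin N) ℤ) (T : Fin k → ℤ)
    (ε : ℤ) (hε : ε = 1 ∨ ε = -1)
    (x : Fin N → ℤ)
    (hmem : (fun j : Fin (N + k + 1) =>
        if h : (j : ℕ) < N then x ⟨(j : ℕ), h⟩
        else if (j : ℕ) = N then ε * N1
        else 0) ∈ latticeL N k q N1 N2 A T) :
    ∀ l : Fin k, q ∣ (A.mulVec (fun i => ε * x i) l - T l) := by
  obtain ⟨c, hc⟩ := hmem
  have hsum : ∀ j : Fin (N + k + 1),
      (if h : (j : ℕ) < N then x ⟨(j : ℕ), h⟩ else if (j : ℕ) = N then ε * N1 else 0)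
      = ∑ i, c i * Bk N k q N1 N2 A T i j := by
    intro j
    have := congrFun hc j
    simpa [Matrix.vecMul, dotProduct] using this
  -- coefficients at small indices
  have hx : ∀ j : Fin N, c (Fin.castAdd (k+1) j) = x j := by
    intro j
    have h := hsum (Fin.castAdd (k+1) j)
    rw [dif_pos (by simpa using j.isLt)] at h
    have hrw : ∀ i : Fin (N+k+1),
        c i * Bk N k q N1 N2 A T i (Fin.castAdd (k+1) j)
        = c i * (if i = Fin.castAdd (k+1) j then 1 else 0) := by
      intro i
      rw [Bk_col_lt _ _ (by simpa using j.isLt)]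
      congr 1
      simp [Fin.ext_iff]
    rw [Finset.sum_congr rfl (fun i _ => hrw i)] at h
    simp only [mul_ite, mul_one, mul_zero, Finset.sum_ite_eq', Finset.mem_univ, if_true] at h
    simp [← h]
  -- coefficient at index N
  have hcN : c ⟨N, by omega⟩ = ε := by
    have h := hsum ⟨N, by omega⟩
    rw [dif_neg (by simp), if_pos rfl] at h
    have hrw : ∀ i : Fin (N+k+1),
        c i * Bk N k q N1 N2 A T i ⟨N, by omega⟩
        = c i * (if i = (⟨N, by omega⟩ : Fin (N+k+1)) then N1 else 0) := by
      intro i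
      rw [Bk_col_N _ _ rfl]
      congr 1
      simp [Fin.ext_iff]
    rw [Finset.sum_congr rfl (fun i _ => hrw i)] at h
    simp only [mul_ite, mul_zero, Finset.sum_ite_eq', Finset.mem_univ, if_true] at h
    have := mul_right_cancel₀ (ne_of_gt hN1) h.symm
    exact this
  intro l
  set jl : Fin (N + k + 1) := ⟨N + 1 + l, by have := l.isLt; omega⟩ with hjl
  have h := hsum jl
  rw [dif_neg (by simp [hjl]; omega), if_neg (by simp [hjl]; omega)] at h
  -- split the sum
  have hsplit : (∑ i, c i * Bk N k q N1 N2 A T i jl)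
      = (∑ i : Fin N, c (Fin.castAdd (k+1) i) * Bk N k q N1 N2 A T (Fin.castAdd (k+1) i) jl)
        + ∑ i : Fin (k+1), c (Fin.natAdd N i) * Bk N k q N1 N2 A T (Fin.natAdd N i) jl :=
    Fin.sum_univ_add (a := N) (b := k+1) (f := fun i => c i * Bk N k q N1 N2 A T i jl)
  rw [hsplit, Fin.sum_univ_succ
      (f := fun i : Fin (k+1) => c (Fin.natAdd N i) * Bk N k q N1 N2 A T (Fin.natAdd N i) jl)] at h
  have h1 : ∀ i : Fin N,
      c (Fin.castAdd (k+1) i) * Bk N k q N1 N2 A T (Fin.castAdd (k+1) i) jl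
      = x i * (N2 * A l i) := by
    intro i
    rw [Bk_col_hi _ _ l rfl, dif_pos (by simpa using i.isLt), hx i]
    congr 2
  have h2 : c (Fin.natAdd N (0 : Fin (k+1))) * Bk N k q N1 N2 A T (Fin.natAdd N (0 : Fin (k+1))) jl
      = ε * -(N2 * T l) := by
    have heq : (Fin.natAdd N (0 : Fin (k+1)) : Fin (N+k+1)) = (⟨N, by omega⟩ : Fin (N+k+1)) := by ext; simp
    rw [heq, hcN]
    rw [Bk_col_hi (⟨N, by omega⟩ : Fin (N+k+1)) jl l rfl]
    rw [dif_neg (by simp)]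
    simp
  have h3 : ∀ i : Fin k,
      c (Fin.natAdd N i.succ) * Bk N k q N1 N2 A T (Fin.natAdd N i.succ) jl
      = c (Fin.natAdd N i.succ) * (if i = l then N2 * q else 0) := by
    intro i
    rw [Bk_col_hi _ _ l rfl, dif_neg (by simp), if_neg (by simp)]
    congr 1
    have : ((Fin.natAdd N i.succ : Fin (N+k+1)) : ℕ) = N + 1 + i := by simp; omega
    rw [this]
    by_cases hi : i = l
    · simp [hi]
    · rw [if_neg (fun hc => hi (Fin.ext (by omega))), if_neg hi]
  rw [Finset.sum_congr rfl (fun i _ => h1 i), h2, Finset.sum_congr rfl (fun i _ => h3 i)] at h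
  simp only [mul_ite, mul_zero, Finset.sum_ite_eq', Finset.mem_univ, if_true] at h
  -- now h : 0 = ∑ x i * (N2 * A l i) + (ε * -(N2 * T l) + c (natAdd N l.succ) * (N2 * q))
  have hS : (∑ i : Fin N, x i * A l i) = ε * T l - c (Fin.natAdd N l.succ) * q := by
    have hfac : N2 * ((∑ i : Fin N, x i * A l i) - (ε * T l - c (Fin.natAdd N l.succ) * q)) = 0 := by
      have hsum' : ∑ i : Fin N, x i * (N2 * A l i) = N2 * ∑ i : Fin N, x i * A l i := by
        rw [Finset.mul_sum]; exact Finset.sum_congr rfl (fun i _ => by ring)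
      rw [hsum'] at h
      linear_combination -h
    have := mul_eq_zero.mp hfac
    rcases this with h' | h'
    · exact absurd h' (ne_of_gt hN2)
    · linarith
  have hε2 : ε * ε = 1 := by rcases hε with h' | h' <;> simp [h']
  refine ⟨-(ε * c (Fin.natAdd N l.succ)), ?_⟩
  have hmv : A.mulVec (fun i => ε * x i) l = ε * ∑ i : Fin N, x i * A l i := by
    simp [Matrix.mulVec, dotProduct, Finset.mul_sum]
    congr 1; ext i; ring
  rw [hmv, hS]
  linear_combination (T l) * hε2
end

section
/- Let r ∈ ℤ^N satisfy A·r ≡ T_k (mod q) entrywise. Then both vectors v = (r, N₁, 0, …, 0) and −v = (−r, −N₁, 0, …, 0) in ℤ^{N+k+1} (with k trailing zeros) belong to the lattice L, and the squared Euclidean norm satisfies ‖v‖² = ‖r‖² + N₁². Moreover, if N ≥ 2 and every coordinate of r lies in {−1, 0, 1}, then ‖v‖² < N² + N₁². -/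
def coeffs (N k : ℕ) (q : ℤ) (A : Matrix (Fin k) (Fin N) ℤ) (T : Fin k → ℤ)
    (r : Fin N → ℤ) : Fin (N + k + 1) → ℤ := fun i =>
  if h : (i : ℕ) < N then r ⟨(i : ℕ), h⟩
  else if h2 : (i : ℕ) = N then 1
  else -((A.mulVec r ⟨(i : ℕ) - (N + 1), by have := i.isLt; omega⟩ -
    T ⟨(i : ℕ) - (N + 1), by have := i.isLt; omega⟩) / q)

lemma coeffs_lt (N k : ℕ) (q : ℤ) (A : Matrix (Fin k) (Fin N) ℤ) (T : Fin k → ℤ)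
    (r : Fin N → ℤ) (x : Fin N) :
    coeffs N k q A T r (Fin.castAdd (k + 1) x) = r x := by
  simp [coeffs, x.isLt]

lemma coeffs_N (N k : ℕ) (q : ℤ) (A : Matrix (Fin k) (Fin N) ℤ) (T : Fin k → ℤ)
    (r : Fin N → ℤ) :
    coeffs N k q A T r (Fin.natAdd N (0 : Fin (k + 1))) = 1 := by
  simp [coeffs]

lemma coeffs_gt (N k : ℕ) (q : ℤ) (A : Matrix (Fin k) (Fin N) ℤ) (T : Fin k → ℤ)
    (r : Fin N → ℤ) (x : Fin k) :
    coeffs N k q A T r (Fin.natAdd N x.succ) = -((A.mulVec r x - T x) / q) := by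
  have hx : N + ((x : ℕ) + 1) - (N + 1) = (x : ℕ) := by omega
  simp only [coeffs, Fin.coe_natAdd, Fin.val_succ]
  rw [dif_neg (by omega), dif_neg (by omega)]
  simp [hx]

lemma keylem (N k : ℕ) (q N1 N2 : ℤ) (hq : 0 < q)
    (A : Matrix (Fin k) (Fin N) ℤ) (T : Fin k → ℤ)
    (r : Fin N → ℤ) (hr : ∀ l : Fin k, q ∣ (A.mulVec r l - T l)) :
    Matrix.vecMul (coeffs N k q A T r) (Bk N k q N1 N2 A T)
    = fun j : Fin (N + k + 1) =>
      if h : (j : ℕ) < N then r ⟨(j : ℕ), h⟩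
      else if (j : ℕ) = N then N1
      else 0 := by
  funext j
  show (∑ i : Fin (N + (k + 1)), coeffs N k q A T r i * Bk N k q N1 N2 A T i j) = _
  rw [Fin.sum_univ_add, Fin.sum_univ_succ]
  simp only [coeffs_lt, coeffs_N, coeffs_gt, one_mul]
  by_cases hj : (j : ℕ) < N
  · have h1 : ∀ x : Fin N, Bk N k q N1 N2 A T (Fin.castAdd (k + 1) x) j
        = if (x : ℕ) = (j : ℕ) then 1 else 0 := by
      intro x
      simp only [Bk, Fin.coe_castAdd]
      rw [dif_pos x.isLt, dif_pos hj]
    have h2 : Bk N k q N1 N2 A T (Fin.natAdd N (0 : Fin (k + 1))) j = 0 := by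
      simp only [Bk, Fin.coe_natAdd, Fin.val_zero, add_zero]
      rw [dif_neg (by omega), dif_pos trivial, dif_pos hj]
    have h3 : ∀ x : Fin k, Bk N k q N1 N2 A T (Fin.natAdd N x.succ) j = 0 := by
      intro x
      simp only [Bk, Fin.coe_natAdd, Fin.val_succ]
      rw [dif_neg (by omega), dif_neg (by omega), if_neg (by omega)]
    simp only [h1, h2, h3, mul_zero, mul_ite, mul_one, add_zero,
      Finset.sum_const_zero, dif_pos hj]
    rw [Finset.sum_eq_single (⟨(j : ℕ), hj⟩ : Fin N)]
    · simp
    · intro b _ hb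
      rw [if_neg]
      intro hbj
      exact hb (Fin.ext hbj)
    · simp
  · by_cases hj2 : (j : ℕ) = N
    · have h1 : ∀ x : Fin N, Bk N k q N1 N2 A T (Fin.castAdd (k + 1) x) j = 0 := by
        intro x
        simp only [Bk, Fin.coe_castAdd]
        rw [dif_pos x.isLt, dif_neg hj, dif_pos hj2]
      have h2 : Bk N k q N1 N2 A T (Fin.natAdd N (0 : Fin (k + 1))) j = N1 := by
        simp only [Bk, Fin.coe_natAdd, Fin.val_zero, add_zero]
        rw [dif_neg (by omega), dif_pos trivial, dif_neg hj, dif_pos hj2]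
      have h3 : ∀ x : Fin k, Bk N k q N1 N2 A T (Fin.natAdd N x.succ) j = 0 := by
        intro x
        simp only [Bk, Fin.coe_natAdd, Fin.val_succ]
        rw [dif_neg (by omega), dif_neg (by omega), if_neg (by omega)]
      simp [h1, h2, h3, hj, hj2]
    · have hjN : N + 1 ≤ (j : ℕ) := by omega
      have hjk : (j : ℕ) - (N + 1) < k := by have := j.isLt; omega
      set l : Fin k := ⟨(j : ℕ) - (N + 1), hjk⟩ with hl
      have h1 : ∀ x : Fin N, Bk N k q N1 N2 A T (Fin.castAdd (k + 1) x) j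
          = N2 * A l x := by
        intro x
        simp only [Bk, Fin.coe_castAdd]
        rw [dif_pos x.isLt, dif_neg hj, dif_neg hj2]
      have h2 : Bk N k q N1 N2 A T (Fin.natAdd N (0 : Fin (k + 1))) j
          = -(N2 * T l) := by
        simp only [Bk, Fin.coe_natAdd, Fin.val_zero, add_zero]
        rw [dif_neg (by omega), dif_pos trivial, dif_neg hj, dif_neg hj2]
      have h3 : ∀ x : Fin k, Bk N k q N1 N2 A T (Fin.natAdd N x.succ) j
          = if (x : ℕ) = (l : ℕ) then N2 * q else 0 := by
        intro x
        simp only [Bk, Fin.coe_natAdd, Fin.val_succ]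
        rw [dif_neg (by omega), dif_neg (by omega)]
        by_cases hx : (x : ℕ) = (l : ℕ)
        · rw [if_pos (by simp only [hl] at hx ⊢; omega), if_pos hx]
        · rw [if_neg (by simp only [hl] at hx ⊢; omega), if_neg hx]
      simp only [h1, h2, h3, mul_ite, mul_zero, dif_neg hj, hj2, if_false]
      obtain ⟨d, hd⟩ := hr l
      have hsum3 : (∑ x : Fin k, if (x : ℕ) = (l : ℕ) then
          -((A.mulVec r x - T x) / q) * (N2 * q) else 0)
          = -((A.mulVec r l - T l) / q) * (N2 * q) := by
        rw [Finset.sum_eq_single l]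
        · simp
        · intro b _ hb
          rw [if_neg (fun h => hb (Fin.ext h))]
        · simp
      rw [hsum3, hd, Int.mul_ediv_cancel_left _ (ne_of_gt hq)]
      have hsum1 : (∑ x : Fin N, r x * (N2 * A l x)) = N2 * A.mulVec r l := by
        rw [Matrix.mulVec, dotProduct, Finset.mul_sum]
        exact Finset.sum_congr rfl (fun x _ => by ring)
      rw [hsum1]
      have hA : A.mulVec r l = T l + q * d := by linarith
      rw [hA]; ring

/-- If `A·r ≡ T_k (mod q)` entrywise, then `v = (r, N₁, 0, …, 0)` and `−v` both
belong to `L`, `‖v‖² = ‖r‖² + N₁²`, and if moreover `N ≥ 2` and all coordinates of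
`r` lie in `{−1,0,1}`, then `‖v‖² < N² + N₁²`. -/
theorem stmt_6 (N k : ℕ) (q N1 N2 : ℤ) (hN : 0 < N) (hk : 0 < k) (hkN : k ≤ N)
    (hq : 0 < q) (hN1 : 0 < N1) (hN2 : 0 < N2)
    (A : Matrix (Fin k) (Fin N) ℤ) (T : Fin k → ℤ)
    (r : Fin N → ℤ) (hr : ∀ l : Fin k, q ∣ (A.mulVec r l - T l))
    (v : Fin (N + k + 1) → ℤ)
    (hv : v = fun j : Fin (N + k + 1) =>
      if h : (j : ℕ) < N then r ⟨(j : ℕ), h⟩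
      else if (j : ℕ) = N then N1
      else 0) :
    v ∈ latticeL N k q N1 N2 A T ∧
    (fun j => -(v j)) ∈ latticeL N k q N1 N2 A T ∧
    (∑ j : Fin (N + k + 1), (v j) ^ 2) = (∑ i : Fin N, (r i) ^ 2) + N1 ^ 2 ∧
    (2 ≤ N → (∀ i : Fin N, r i = -1 ∨ r i = 0 ∨ r i = 1) →
      (∑ j : Fin (N + k + 1), (v j) ^ 2) < (N : ℤ) ^ 2 + N1 ^ 2) := by
  have hkey := keylem N k q N1 N2 hq A T r hr
  have hnorm : (∑ j : Fin (N + k + 1), (v j) ^ 2)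
      = (∑ i : Fin N, (r i) ^ 2) + N1 ^ 2 := by
    subst hv
    show (∑ j : Fin (N + (k + 1)), _) = _
    rw [Fin.sum_univ_add, Fin.sum_univ_succ]
    simp only [Fin.coe_castAdd, Fin.coe_natAdd, Fin.val_succ, Fin.val_zero, add_zero]
    have e1 : ∀ x : Fin N, (if h : (x : ℕ) < N then r ⟨(x : ℕ), h⟩
        else if (x : ℕ) = N then N1 else 0) ^ 2 = (r x) ^ 2 := by
      intro x; rw [dif_pos x.isLt]
    have e2 : (if h : N < N then r ⟨N, h⟩ else if N = N then N1 else 0) ^ 2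
        = N1 ^ 2 := by rw [dif_neg (by omega), if_pos rfl]
    have e3 : ∀ x : Fin k, (if h : N + ((x : ℕ) + 1) < N then r ⟨N + ((x : ℕ) + 1), h⟩
        else if N + ((x : ℕ) + 1) = N then N1 else 0) ^ 2 = 0 := by
      intro x; rw [dif_neg (by omega), if_neg (by omega)]; ring
    rw [dif_neg (lt_irrefl N), if_pos trivial]
    rw [Finset.sum_congr rfl (fun x _ => e1 x), Finset.sum_congr rfl (fun x _ => e3 x)]
    simp
  refine ⟨⟨coeffs N k q A T r, by rw [hkey, hv]⟩,
    ⟨-(coeffs N k q A T r), ?_⟩, hnorm, ?_⟩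
  · rw [Matrix.neg_vecMul, hkey, hv]
    rfl
  · intro hN2' hrval
    rw [hnorm]
    have hle : (∑ i : Fin N, (r i) ^ 2) ≤ (N : ℤ) := by
      calc (∑ i : Fin N, (r i) ^ 2) ≤ ∑ _i : Fin N, (1 : ℤ) := by
            refine Finset.sum_le_sum (fun i _ => ?_)
            rcases hrval i with h | h | h <;> rw [h] <;> norm_num
        _ = (N : ℤ) := by simp
    have hNN : (N : ℤ) < (N : ℤ) ^ 2 := by
      have : (2 : ℤ) ≤ (N : ℤ) := by exact_mod_cast hN2'
      nlinarith
    linarith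
end
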